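/- arXiv:0902.4899 — 6 statements merged into one kernel-verified Lean document; each statement's English description precedes it below -/
import Mathlib

section
/- B_2 is generated over B_1 by brackets with the generators: the second term of the lower central series satisfies L_2 = (Σ_{i=1}^n [x_i, L_1]) + L_3, i.e. every element of [A,A] is, modulo L_3, a sum of brackets [x_i, a] with a ∈ A. -/
/-- The lower central series of the free algebra `A_n = FreeAlgebra ℂ (Fin n)`,
as a chain of `ℂ`-subspaces: `lcs n 1 = A`, `lcs n (m+1) = span {[a,w] : a ∈ A, w ∈ lcs n m}`.
(The value at `0` is junk, set to `⊤`.) -/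
def lcs (n : ℕ) : ℕ → Submodule ℂ (FreeAlgebra ℂ (Fin n))
  | 0 => ⊤
  | 1 => ⊤
  | m + 2 => Submodule.span ℂ
      {y | ∃ a w, w ∈ lcs n (m + 1) ∧ y = a * w - w * a}

/-- For `g ∈ A` and a `ℂ`-subspace `V ⊆ A`, `[g, V] = span {[g,w] : w ∈ V}`. -/
def brS {n : ℕ} (g : FreeAlgebra ℂ (Fin n)) (V : Submodule ℂ (FreeAlgebra ℂ (Fin n))) :
    Submodule ℂ (FreeAlgebra ℂ (Fin n)) :=
  Submodule.span ℂ {y | ∃ w ∈ V, y = g * w - w * g}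

theorem FreeAlgebra.commutator_mem_of_forall_ι {R X : Type*} [CommRing R]
    {S : Submodule R (FreeAlgebra R X)} (hS : ∀ x w, ι R x * w - w * ι R x ∈ S)
    (a w : FreeAlgebra R X) : a * w - w * a ∈ S := by
  induction a using FreeAlgebra.induction generalizing w with
  | grade0 r => simp [Algebra.commutes]
  | grade1 x => exact hS x w
  | mul a b ha hb =>
    have h : a * b * w - w * (a * b) =
        (a * (b * w) - b * w * a) + (b * (w * a) - w * a * b) := by
      noncomm_ring
    exact h ▸ S.add_mem (ha _) (hb _)
  | add a b ha hb =>
    have h : (a + b) * w - w * (a + b) = (a * w - w * a) + (b * w - w * b) := by noncomm_ring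
    exact h ▸ S.add_mem (ha w) (hb w)

theorem mem_brS {n : ℕ} {g w : FreeAlgebra ℂ (Fin n)}
    {V : Submodule ℂ (FreeAlgebra ℂ (Fin n))}
    (hw : w ∈ V) : g * w - w * g ∈ brS g V :=
  Submodule.subset_span ⟨w, hw, rfl⟩

theorem brS_le {n : ℕ} {g : FreeAlgebra ℂ (Fin n)}
    {V p : Submodule ℂ (FreeAlgebra ℂ (Fin n))}
    (h : ∀ w ∈ V, g * w - w * g ∈ p) : brS g V ≤ p :=
  Submodule.span_le.2 <| by
    rintro _ ⟨w, hw, rfl⟩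
    exact h w hw

theorem commutator_mem_lcs_succ {n m : ℕ} (a : FreeAlgebra ℂ (Fin n))
    {w : FreeAlgebra ℂ (Fin n)} (hw : w ∈ lcs n (m + 1)) : a * w - w * a ∈ lcs n (m + 2) := by
  rw [lcs]
  exact Submodule.subset_span ⟨a, w, hw, rfl⟩

theorem lcs_succ_le_iff {n m : ℕ} {p : Submodule ℂ (FreeAlgebra ℂ (Fin n))} :
    lcs n (m + 2) ≤ p ↔ ∀ a, ∀ w ∈ lcs n (m + 1), a * w - w * a ∈ p := by
  rw [lcs, Submodule.span_le]
  constructor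
  · exact fun h a w hw => h ⟨a, w, hw, rfl⟩
  · rintro h _ ⟨a, w, hw, rfl⟩
    exact h a w hw

theorem lcs_antitone (n : ℕ) : Antitone (lcs n) := by
  refine antitone_nat_of_succ_le fun m => ?_
  induction m with
  | zero => exact le_rfl
  | succ m ih =>
    cases m with
    | zero => exact le_top
    | succ m => exact lcs_succ_le_iff.2 fun a w hw => commutator_mem_lcs_succ a (ih hw)

theorem stmt_0_general (n : ℕ) :
    lcs n 2 = (∑ i : Fin n, brS (FreeAlgebra.ι ℂ i) (lcs n 1)) + lcs n 3 := by
  set S := ∑ i : Fin n, brS (FreeAlgebra.ι ℂ i) (lcs n 1)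
  have lcs_two_le : lcs n 2 ≤ S := lcs_succ_le_iff.2 fun a w _ =>
    FreeAlgebra.commutator_mem_of_forall_ι (fun i _ =>
      (Finset.single_le_sum (fun _ _ => zero_le) (Finset.mem_univ i) : _ ≤ S)
        (mem_brS trivial)) a w
  have le_lcs_two : S ≤ lcs n 2 :=
    Finset.sum_induction _ (· ≤ lcs n 2) (fun _ _ => sup_le) bot_le fun _ _ =>
      brS_le fun _ hw => commutator_mem_lcs_succ _ hw
  exact le_antisymm (lcs_two_le.trans le_self_add)
    (sup_le le_lcs_two (lcs_antitone n (by norm_num)))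

/-- `L_2 = (Σ_{i=1}^n [x_i, L_1]) + L_3`. -/
theorem stmt_0 (n : ℕ) (hn : 2 ≤ n) :
    lcs n 2 = (∑ i : Fin n, brS (FreeAlgebra.ι ℂ i) (lcs n 1)) + lcs n 3 :=
  stmt_0_general n
end

section
/- In any associative algebra over ℚ, for all elements u, v, w the following identity holds: [u³,[v,w]] = 3[u²,[uv,w]] − 3[u,[u²v,w]] + (3/2)[u²,[v,[u,w]]] − (3/2)[u,[v,[u²,w]]] + [u,[u,[u,[v,w]]]] − (3/2)[u,[u,[v,[u,w]]]] + (3/2)[u,[v,[u,[u,w]]]]. -/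
/-! Both sides are noncommutative polynomials with rational coefficients whose only
denominator is `2`; after doubling, the identity has integer coefficients and holds in
every ring, where it is checked by expanding all commutators. -/

theorem two_mul_lie_pow_three_lie (R : Type*) [Ring R] (u v w : R) :
    2 * ⁅u ^ 3, ⁅v, w⁆⁆ =
      6 * ⁅u ^ 2, ⁅u * v, w⁆⁆ - 6 * ⁅u, ⁅u ^ 2 * v, w⁆⁆
      + 3 * ⁅u ^ 2, ⁅v, ⁅u, w⁆⁆⁆ - 3 * ⁅u, ⁅v, ⁅u ^ 2, w⁆⁆⁆
      + 2 * ⁅u, ⁅u, ⁅u, ⁅v, w⁆⁆⁆⁆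
      - 3 * ⁅u, ⁅u, ⁅v, ⁅u, w⁆⁆⁆⁆ + 3 * ⁅u, ⁅v, ⁅u, ⁅u, w⁆⁆⁆⁆ := by
  simp only [Ring.lie_def]
  noncomm_ring

/-- in any associative algebra over ℚ, with `[a,b] = ab − ba`,
`[u³,[v,w]] = 3[u²,[uv,w]] − 3[u,[u²v,w]] + (3/2)[u²,[v,[u,w]]] − (3/2)[u,[v,[u²,w]]]
 + [u,[u,[u,[v,w]]]] − (3/2)[u,[u,[v,[u,w]]]] + (3/2)[u,[v,[u,[u,w]]]]`. -/
theorem stmt_4 (R : Type*) [Ring R] [Algebra ℚ R] (u v w : R)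
    (brk : R → R → R) (hbrk : ∀ a b : R, brk a b = a * b - b * a) :
    brk (u ^ 3) (brk v w) =
      3 * brk (u ^ 2) (brk (u * v) w)
      - 3 * brk u (brk (u ^ 2 * v) w)
      + (3 / 2 : ℚ) • brk (u ^ 2) (brk v (brk u w))
      - (3 / 2 : ℚ) • brk u (brk v (brk (u ^ 2) w))
      + brk u (brk u (brk u (brk v w)))
      - (3 / 2 : ℚ) • brk u (brk u (brk v (brk u w)))
      + (3 / 2 : ℚ) • brk u (brk v (brk u (brk u w))) := by
  simp only [hbrk, ← Ring.lie_def]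
  apply smul_right_injective R (two_ne_zero (α := ℚ))
  simp only [smul_add, smul_sub, smul_smul]
  norm_num
  simp only [Algebra.smul_def, map_ofNat]
  rw [two_mul_lie_pow_three_lie, ← mul_assoc, ← mul_assoc]
  norm_num
end

section
/- Let B be a commutative algebra over a field k of characteristic zero and let I ⊆ B ⊗_k B be the kernel of the multiplication homomorphism μ : B ⊗_k B → B (an ideal of B ⊗_k B). Then for every natural number N ≥ 1, the ideal power I^N, viewed as a k-subspace of B ⊗_k B, is equal to the k-linear span of the elements (1 ⊗ b)·(a ⊗ 1 − 1 ⊗ a)^N with a, b ∈ B. -/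
/-!
Every `x ∈ I = ker μ` equals `x - 1 ⊗ μ x`, which is visibly a `k`-combination of the
elements `(1 ⊗ b) * (a ⊗ 1 - 1 ⊗ a)`; hence `I ^ N` is spanned by the products
`(1 ⊗ b) * ∏ᵢ (aᵢ ⊗ 1 - 1 ⊗ aᵢ)`.
Since `a ↦ a ⊗ 1 - 1 ⊗ a` is additive, the polarization identity
`∑_{S ⊆ s} (-1)^|S| (∑_{i ∈ S} xᵢ)^|s| = (-1)^|s| |s|! ∏_{i ∈ s} xᵢ`
turns each such product into a combination of `N`-th powers as soon as `N!` is invertible.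
-/

open TensorProduct

namespace Finset

variable {R ι : Type*} [CommRing R] [DecidableEq ι] (x : ι → R)

theorem sum_powerset_insert_neg_one_pow_mul_sum_pow {a : ι} {s : Finset ι} (ha : a ∉ s)
    (d : ℕ) :
    ∑ S ∈ (insert a s).powerset, (-1 : R) ^ S.card * (∑ i ∈ S, x i) ^ d =
      -∑ j ∈ range d, (d.choose (j + 1) : R) * x a ^ (j + 1) *
        ∑ S ∈ s.powerset, (-1 : R) ^ S.card * (∑ i ∈ S, x i) ^ (d - (j + 1)) := by
  have binomial_step (σ : R) : σ ^ d - (x a + σ) ^ d =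
      -∑ j ∈ range d, (d.choose (j + 1) : R) * x a ^ (j + 1) * σ ^ (d - (j + 1)) := by
    rw [add_pow, sum_range_succ']
    simp only [pow_zero, one_mul, Nat.choose_zero_right, Nat.cast_one, mul_one, Nat.sub_zero]
    rw [sub_add_cancel_right, neg_inj]
    exact sum_congr rfl fun j _ => by ring
  rw [sum_powerset_insert ha, ← sum_add_distrib]
  simp_rw [mul_sum, sum_comm (s := range d), ← sum_neg_distrib]
  refine sum_congr rfl fun S hS => ?_
  have haS : a ∉ S := fun h => ha (mem_powerset.mp hS h)
  rw [card_insert_of_notMem haS, sum_insert haS, pow_succ, mul_neg_one, neg_mul,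
    ← sub_eq_add_neg, ← mul_sub, binomial_step, mul_neg, mul_sum, ← sum_neg_distrib]
  exact sum_congr rfl fun j _ => by ring

theorem sum_powerset_neg_one_pow_mul_sum_pow_of_lt_card {s : Finset ι} {d : ℕ}
    (hd : d < s.card) :
    ∑ S ∈ s.powerset, (-1 : R) ^ S.card * (∑ i ∈ S, x i) ^ d = 0 := by
  induction s using Finset.induction_on generalizing d with
  | empty => simp at hd
  | insert a s ha ih =>
    rw [card_insert_of_notMem ha] at hd
    rw [sum_powerset_insert_neg_one_pow_mul_sum_pow x ha, neg_eq_zero]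
    refine sum_eq_zero fun j hj => ?_
    rw [ih (by have := mem_range.mp hj; omega), mul_zero]

theorem sum_powerset_neg_one_pow_mul_sum_pow_card (s : Finset ι) :
    ∑ S ∈ s.powerset, (-1 : R) ^ S.card * (∑ i ∈ S, x i) ^ s.card =
      (-1 : R) ^ s.card * s.card.factorial * ∏ i ∈ s, x i := by
  induction s using Finset.induction_on with
  | empty => simp
  | insert a s ha ih =>
    rw [sum_powerset_insert_neg_one_pow_mul_sum_pow x ha, card_insert_of_notMem ha,
      sum_range_succ', sum_eq_zero fun j hj => ?_]
    · simp only [zero_add, Nat.add_sub_cancel, Nat.choose_one_right, pow_one, ih,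
        prod_insert ha, Nat.factorial_succ]
      push_cast
      ring
    · rw [sum_powerset_neg_one_pow_mul_sum_pow_of_lt_card x
        (by have := mem_range.mp hj; omega), mul_zero]

end Finset

namespace Algebra.TensorProduct

variable (R : Type*) {B : Type*} [CommRing R] [CommRing B] [Algebra R B]

def tmulOneSubOneTmul : B →ₗ[R] B ⊗[R] B :=
  (TensorProduct.mk R B B).flip 1 - TensorProduct.mk R B B 1

variable {R}

@[simp]
theorem tmulOneSubOneTmul_apply (a : B) :
    tmulOneSubOneTmul R a = a ⊗ₜ[R] (1 : B) - (1 : B) ⊗ₜ[R] a := rfl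

theorem tmulOneSubOneTmul_mem_ker_lmul' (a : B) :
    tmulOneSubOneTmul R a ∈ RingHom.ker (lmul' R (S := B)) := by
  simp [RingHom.mem_ker]

variable (R) in
def prodTmulOneSubOneTmulSet (n : ℕ) : Set (B ⊗[R] B) :=
  {z | ∃ (b : B) (a : Fin n → B), z = ((1 : B) ⊗ₜ[R] b) * ∏ i, tmulOneSubOneTmul R (a i)}

theorem sub_one_tmul_lmul'_mem_span (x : B ⊗[R] B) :
    x - (1 : B) ⊗ₜ[R] lmul' R x ∈ Submodule.span R (prodTmulOneSubOneTmulSet R 1) := by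
  induction x using TensorProduct.induction_on with
  | zero => simp
  | tmul a b =>
    refine Submodule.subset_span ⟨b, fun _ => a, ?_⟩
    simp [mul_sub, mul_comm a b]
  | add x y hx hy =>
    rw [map_add, tmul_add, add_sub_add_comm]
    exact add_mem hx hy

theorem restrictScalars_ker_lmul'_le_span :
    (RingHom.ker (lmul' R (S := B))).restrictScalars R ≤
      Submodule.span R (prodTmulOneSubOneTmulSet R 1) := by
  intro x hx
  simpa [RingHom.mem_ker.mp hx] using sub_one_tmul_lmul'_mem_span x

theorem span_prodTmulOneSubOneTmulSet_one_mul_span_le (n : ℕ) :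
    Submodule.span R (prodTmulOneSubOneTmulSet R 1) *
        Submodule.span R (prodTmulOneSubOneTmulSet (B := B) R n) ≤
      Submodule.span R (prodTmulOneSubOneTmulSet R (n + 1)) := by
  rw [Submodule.span_mul_span]
  refine Submodule.span_mono ?_
  rintro _ ⟨_, ⟨b, a, rfl⟩, _, ⟨b', a', rfl⟩, rfl⟩
  refine ⟨b * b', Fin.cons (a 0) a', ?_⟩
  simp only [Fin.prod_univ_succ, Fin.cons_zero, Fin.cons_succ]
  rw [← one_mul (1 : B), ← Algebra.TensorProduct.tmul_mul_tmul, one_mul]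
  ring

theorem restrictScalars_ker_lmul'_pow_le_span (n : ℕ) :
    (RingHom.ker (lmul' R (S := B)) ^ (n + 1)).restrictScalars R ≤
      Submodule.span R (prodTmulOneSubOneTmulSet R (n + 1)) := by
  induction n with
  | zero => simpa using restrictScalars_ker_lmul'_le_span
  | succ n ih =>
    intro x hx
    rw [Submodule.restrictScalars_mem, pow_succ'] at hx
    refine Submodule.mul_induction_on hx (fun y hy z hz => ?_) (fun _ _ => add_mem)
    exact span_prodTmulOneSubOneTmulSet_one_mul_span_le _
      (Submodule.mul_mem_mul (restrictScalars_ker_lmul'_le_span hy) (ih hz))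

theorem span_prodTmulOneSubOneTmulSet_le_span_pow {n : ℕ} (hn : IsUnit (n.factorial : R)) :
    Submodule.span R (prodTmulOneSubOneTmulSet R n) ≤ Submodule.span R
      {z : B ⊗[R] B | ∃ a b : B, z = ((1 : B) ⊗ₜ[R] b) * tmulOneSubOneTmul R a ^ n} := by
  classical
  refine Submodule.span_le.mpr ?_
  rintro _ ⟨b, a, rfl⟩
  have polarization := Finset.sum_powerset_neg_one_pow_mul_sum_pow_card
    (fun i => tmulOneSubOneTmul R (a i)) Finset.univ
  rw [Finset.card_univ, Fintype.card_fin] at polarization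
  rw [SetLike.mem_coe, ← Submodule.smul_mem_iff_of_isUnit _ ((isUnit_one.neg.pow n).mul hn)]
  have expand : ((-1 : R) ^ n * n.factorial) •
        (((1 : B) ⊗ₜ[R] b) * ∏ i, tmulOneSubOneTmul R (a i)) =
      ∑ S ∈ Finset.univ.powerset, ((-1 : R) ^ S.card) •
        (((1 : B) ⊗ₜ[R] b) * tmulOneSubOneTmul R (∑ i ∈ S, a i) ^ n) := by
    simp only [Algebra.smul_def, map_mul, map_pow, map_neg, map_one, map_natCast, map_sum]
    rw [mul_left_comm, ← polarization, Finset.mul_sum]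
    exact Finset.sum_congr rfl fun S _ => by ring
  rw [expand]
  refine Submodule.sum_mem _ fun S _ => Submodule.smul_mem _ _ (Submodule.subset_span ?_)
  exact ⟨∑ i ∈ S, a i, b, rfl⟩

theorem restrictScalars_ker_lmul'_pow_eq_span {n : ℕ} (hn : IsUnit (n.factorial : R))
    (hn0 : n ≠ 0) :
    (RingHom.ker (lmul' R (S := B)) ^ n).restrictScalars R = Submodule.span R
      {z : B ⊗[R] B | ∃ a b : B, z = ((1 : B) ⊗ₜ[R] b) * tmulOneSubOneTmul R a ^ n} := by
  refine le_antisymm ?_ (Submodule.span_le.mpr ?_)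
  · obtain ⟨m, rfl⟩ := Nat.exists_eq_succ_of_ne_zero hn0
    exact (restrictScalars_ker_lmul'_pow_le_span m).trans
      (span_prodTmulOneSubOneTmulSet_le_span_pow hn)
  · rintro _ ⟨a, b, rfl⟩
    exact Ideal.mul_mem_left _ _ (Ideal.pow_mem_pow (tmulOneSubOneTmul_mem_ker_lmul' a) n)

end Algebra.TensorProduct

/-- for `B` a commutative algebra over a field `k` of characteristic zero and
`I = ker(μ : B ⊗ B → B)`, the ideal power `I^N` (`N ≥ 1`), as a `k`-subspace of `B ⊗ B`,
is the `k`-span of the elements `(1 ⊗ b)·(a ⊗ 1 − 1 ⊗ a)^N`, `a, b ∈ B`. -/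
theorem stmt_8 (k : Type*) [Field k] [CharZero k]
    (B : Type*) [CommRing B] [Algebra k B]
    (I : Ideal (B ⊗[k] B))
    (hI : I = RingHom.ker (Algebra.TensorProduct.lmul' k (S := B) : B ⊗[k] B →ₐ[k] B))
    (N : ℕ) (hN : 1 ≤ N) :
    Submodule.restrictScalars k (I ^ N) =
      Submodule.span k
        {z : B ⊗[k] B | ∃ a b : B,
          z = ((1 : B) ⊗ₜ[k] b) * (a ⊗ₜ[k] (1 : B) - (1 : B) ⊗ₜ[k] a) ^ N} := by
  subst hI
  exact Algebra.TensorProduct.restrictScalars_ker_lmul'_pow_eq_span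
    (isUnit_iff_ne_zero.mpr (Nat.cast_ne_zero.mpr N.factorial_ne_zero)) (by omega)
end

section
/- For all elements a, b, c, d, e of the free algebra A, the element [a[b,c],[d,e]] − [a,[d[b,c],e]] + [b,[d[a,c],e]] − [c,[d[a,b],e]] lies in L_4; that is, [a[b,c],[d,e]] ≡ [a,[d[b,c],e]] − [b,[d[a,c],e]] + [c,[d[a,b],e]] modulo L_4. -/
/-- Commutator notation. -/
def com {n : ℕ} (x y : FreeAlgebra ℂ (Fin n)) : FreeAlgebra ℂ (Fin n) := x * y - y * x

lemma lcs_step {n m : ℕ} {w : FreeAlgebra ℂ (Fin n)} (hw : w ∈ lcs n (m + 1))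
    (g : FreeAlgebra ℂ (Fin n)) : com g w ∈ lcs n (m + 2) :=
  Submodule.subset_span ⟨g, w, hw, rfl⟩

lemma triple_mem {n : ℕ} (u v w z : FreeAlgebra ℂ (Fin n)) :
    com u (com v (com w z)) ∈ lcs n 4 :=
  lcs_step (lcs_step (lcs_step (show z ∈ lcs n 1 from Submodule.mem_top) w) v) u

set_option maxHeartbeats 4000000 in
/-- for all `a,b,c,d,e ∈ A`,
`[a[b,c],[d,e]] − [a,[d[b,c],e]] + [b,[d[a,c],e]] − [c,[d[a,b],e]] ∈ L_4`. -/
theorem stmt_10 (n : ℕ) (hn : 2 ≤ n) (a b c d e : FreeAlgebra ℂ (Fin n)) :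
    ((a * (b*c - c*b)) * (d*e - e*d) - (d*e - e*d) * (a * (b*c - c*b)))
    - (a * ((d * (b*c - c*b)) * e - e * (d * (b*c - c*b)))
        - ((d * (b*c - c*b)) * e - e * (d * (b*c - c*b))) * a)
    + (b * ((d * (a*c - c*a)) * e - e * (d * (a*c - c*a)))
        - ((d * (a*c - c*a)) * e - e * (d * (a*c - c*a))) * b)
    - (c * ((d * (a*b - b*a)) * e - e * (d * (a*b - b*a)))
        - ((d * (a*b - b*a)) * e - e * (d * (a*b - b*a))) * c)
    ∈ lcs n 4 := by
  set X := ((a * (b*c - c*b)) * (d*e - e*d) - (d*e - e*d) * (a * (b*c - c*b)))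
    - (a * ((d * (b*c - c*b)) * e - e * (d * (b*c - c*b)))
        - ((d * (b*c - c*b)) * e - e * (d * (b*c - c*b))) * a)
    + (b * ((d * (a*c - c*a)) * e - e * (d * (a*c - c*a)))
        - ((d * (a*c - c*a)) * e - e * (d * (a*c - c*a))) * b)
    - (c * ((d * (a*b - b*a)) * e - e * (d * (a*b - b*a)))
        - ((d * (a*b - b*a)) * e - e * (d * (a*b - b*a))) * c) with hXdef
  have key : (3 : ℂ) • X
      = com ((2) * (a*b)) (com c (com d e))
      + com ((4) * a) (com (b*c) (com d e))
      + com ((4) * a) (com b (com (c*d) e))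
      + com ((-7) * a) (com b (com c (d*e)))
      + com ((-2) * a) (com b (com (c*e) d))
      + com ((4) * a) (com b (com c (e*d)))
      + com ((-1) * (a*b)) (com d (com c e))
      + com ((2) * a) (com (b*d) (com c e))
      + com ((5) * a) (com (b*e) (com c d))
      + com ((-3) * (a*c)) (com b (com d e))
      + com ((-3) * a) (com (c*b) (com d e))
      + com ((3) * a) (com c (com b (d*e)))
      + com ((-4) * a) (com c (com (b*e) d))
      + com ((-1) * (a*c)) (com d (com b e))
      + com ((1) * a) (com (c*e) (com b d))
      + com ((-4) * a) (com (d*b) (com c e))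
      + com ((-4) * (b*a)) (com c (com d e))
      + com ((3) * b) (com (a*c) (com d e))
      + com ((-1) * b) (com a (com (c*d) e))
      + com ((2) * b) (com a (com c (d*e)))
      + com ((1) * b) (com a (com (c*e) d))
      + com ((-1) * b) (com (a*e) (com c d))
      + com ((1) * b) (com (c*a) (com d e))
      + com ((-1) * b) (com c (com a (d*e)))
      + com ((-1) * (b*c)) (com d (com a e))
      + com ((1) * b) (com (c*e) (com a d))
      + com ((2) * b) (com (d*a) (com c e))
      + com ((-2) * (b*d)) (com c (com a e))
      + com ((-2) * (b*e)) (com a (com c d))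
      + com ((-1) * (c*a)) (com b (com d e))
      + com ((5) * c) (com a (com (b*d) e))
      + com ((-4) * c) (com a (com b (d*e)))
      + com ((-1) * c) (com a (com (b*e) d))
      + com ((2) * c) (com (a*d) (com b e))
      + com ((3) * c) (com (a*e) (com b d))
      + com ((-3) * (c*b)) (com a (com d e))
      + com ((1) * c) (com b (com (a*d) e))
      + com ((2) * c) (com b (com a (d*e)))
      + com ((-3) * c) (com b (com (a*e) d))
      + com ((3) * c) (com (b*e) (com a d))
      + com ((-4) * c) (com (d*a) (com b e))
      + com ((2) * (c*e)) (com a (com b d))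
      + com ((-2) * (c*e)) (com b (com a d))
      + com ((-2) * (d*a)) (com b (com c e))
      + com ((2) * d) (com b (com (a*c) e))
      + com ((-2) * (d*c)) (com a (com b e)) := by
    rw [Algebra.smul_def, map_ofNat, hXdef]
    simp only [com]
    noncomm_ring
  have h3 : (3 : ℂ) • X ∈ lcs n 4 := by
    rw [key]
    -- each summand is a triple commutator with a scaled first entry
    repeat' first
      | exact triple_mem _ _ _ _
      | apply Submodule.add_mem
  have := Submodule.smul_mem (lcs n 4) ((3 : ℂ)⁻¹) h3
  rwa [inv_smul_smul₀ (by norm_num : (3:ℂ) ≠ 0)] at this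
end

section
/- With B = A ⊗ E the tensor product of an associative algebra A with the exterior algebra E on k generators, the span of commutators of B decomposes as [B,B] = [A,A] ⊗ (E^0 ⊕ E_−) + A ⊗ E_+^{≥2}, where the two summands intersect trivially. -/
open TensorProduct

/-- The exterior (Grassmann) algebra over ℂ on `k` generators. -/
abbrev ExtAlg (k : ℕ) := ExteriorAlgebra ℂ (Fin k → ℂ)

/-- The degree-`i` graded component `E^i` of the exterior algebra. -/
noncomputable def Egrade (k i : ℕ) : Submodule ℂ (ExtAlg k) :=
  LinearMap.range (ExteriorAlgebra.ι ℂ : (Fin k → ℂ) →ₗ[ℂ] ExtAlg k) ^ i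

/-- `E_− = ⊕_{i odd} E^i`. -/
noncomputable def Eodd (k : ℕ) : Submodule ℂ (ExtAlg k) := ⨆ i ∈ {i : ℕ | Odd i}, Egrade k i

/-- `E_+^{≥2} = ⊕_{i even, i ≥ 2} E^i`. -/
noncomputable def EevenGe2 (k : ℕ) : Submodule ℂ (ExtAlg k) :=
  ⨆ i ∈ {i : ℕ | Even i ∧ 2 ≤ i}, Egrade k i

/-- `E_−^{≥3} = ⊕_{i odd, i ≥ 3} E^i`. -/
noncomputable def EoddGe3 (k : ℕ) : Submodule ℂ (ExtAlg k) :=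
  ⨆ i ∈ {i : ℕ | Odd i ∧ 3 ≤ i}, Egrade k i

/-- `E_+^{≥4} = ⊕_{i even, i ≥ 4} E^i`. -/
noncomputable def EevenGe4 (k : ℕ) : Submodule ℂ (ExtAlg k) :=
  ⨆ i ∈ {i : ℕ | Even i ∧ 4 ≤ i}, Egrade k i

/-- `[X,Y]`: the ℂ-span of all commutators `[x,y] = xy − yx`, `x ∈ X`, `y ∈ Y`. -/
noncomputable def commS {B : Type*} [Ring B] [Algebra ℂ B] (X Y : Submodule ℂ B) : Submodule ℂ B :=
  Submodule.span ℂ {z | ∃ x ∈ X, ∃ y ∈ Y, z = x * y - y * x}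

/-- `U ⊗ F`: the ℂ-span of the pure tensors `u ⊗ f`, `u ∈ U`, `f ∈ F`, inside `A ⊗ E`. -/
noncomputable def tenS {A : Type*} [Ring A] [Algebra ℂ A] {k : ℕ}
    (U : Submodule ℂ A) (F : Submodule ℂ (ExtAlg k)) : Submodule ℂ (A ⊗[ℂ] ExtAlg k) :=
  Submodule.span ℂ {z | ∃ u ∈ U, ∃ f ∈ F, z = u ⊗ₜ[ℂ] f}

/-!
Homogeneous elements of `E` supercommute, `f e = (-1)^(ij) e f`, so the commutator of `a ⊗ e`
and `b ⊗ f` is `(ab - (-1)^(ij) ba) ⊗ ef`. It lies in `A ⊗ E_+^{≥2}` when `ef` has even degree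
`≥ 2`; otherwise `ij` is even and it equals `[a,b] ⊗ ef` with `ef ∈ E^0 ⊕ E_−`. Conversely
`[a,b] ⊗ f = [a ⊗ f, b ⊗ 1]`, and `E_+^{≥2}` is spanned by products `v p` with `v ∈ E^1` and
`p` odd, for which `a ⊗ v p = ½ [a ⊗ v, 1 ⊗ p]`. The two summands meet trivially because
`E^0 ⊕ E_−` and `E_+^{≥2}` do: tensoring with `A` a projection of `E` onto `E_+^{≥2}` that
kills `E^0 ⊕ E_−` separates them.
-/

namespace ExteriorAlgebra

variable {R M : Type*} [CommRing R] [AddCommGroup M] [Module R M]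

theorem mul_ι_of_mem_exteriorPower {j : ℕ} {f : ExteriorAlgebra R M} (hf : f ∈ ⋀[R]^j M)
    (v : M) : f * ι R v = (-1 : R) ^ j • (ι R v * f) := by
  induction hf using Submodule.pow_induction_on_left' with
  | algebraMap r => simp [Algebra.commutes]
  | add x y i _ _ ihx ihy => simp only [add_mul, mul_add, ihx, ihy, smul_add]
  | mem_mul m hm i x _ ih =>
    obtain ⟨w, rfl⟩ := hm
    have hswap : ι R w * ι R v = -(ι R v * ι R w) :=
      eq_neg_of_add_eq_zero_right (ι_add_mul_swap v w)
    rw [mul_assoc, ih, mul_smul_comm, ← mul_assoc, hswap, pow_succ, mul_neg_one, neg_smul,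
      neg_mul, smul_neg, mul_assoc]

theorem mul_comm_of_mem_exteriorPower {i j : ℕ} {e f : ExteriorAlgebra R M}
    (he : e ∈ ⋀[R]^i M) (hf : f ∈ ⋀[R]^j M) : f * e = (-1 : R) ^ (i * j) • (e * f) := by
  induction he using Submodule.pow_induction_on_left' with
  | algebraMap r => simp [Algebra.commutes]
  | add x y n _ _ ihx ihy => simp only [mul_add, add_mul, ihx, ihy, smul_add]
  | mem_mul m hm n x _ ih =>
    obtain ⟨w, rfl⟩ := hm
    rw [← mul_assoc, mul_ι_of_mem_exteriorPower hf, smul_mul_assoc, mul_assoc, ih,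
      mul_smul_comm, smul_smul, ← pow_add, ← mul_assoc, Nat.succ_mul, add_comm j]

end ExteriorAlgebra

section Commutator

variable {B : Type*} [Ring B] [Algebra ℂ B]

theorem commS_span_le {s t : Set B} {S : Submodule ℂ B}
    (h : ∀ x ∈ s, ∀ y ∈ t, x * y - y * x ∈ S) :
    commS (Submodule.span ℂ s) (Submodule.span ℂ t) ≤ S := by
  have hcomm : commS (Submodule.span ℂ s) (Submodule.span ℂ t)
      = Submodule.map₂ (LinearMap.mul ℂ B - (LinearMap.mul ℂ B).flip)
          (Submodule.span ℂ s) (Submodule.span ℂ t) := by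
    rw [Submodule.map₂_eq_span_image2, commS]
    congr 1
    ext z
    simp [Set.mem_image2, eq_comm]
  rw [hcomm, Submodule.map₂_span_span, Submodule.span_le]
  rintro _ ⟨x, hx, y, hy, rfl⟩
  simpa using h x hx y hy

theorem commutator_mem_commS {X Y : Submodule ℂ B} {x y : B} (hx : x ∈ X) (hy : y ∈ Y) :
    x * y - y * x ∈ commS X Y :=
  Submodule.subset_span ⟨x, hx, y, hy, rfl⟩

end Commutator

section TensorExterior

variable {A : Type*} [Ring A] [Algebra ℂ A] {k : ℕ}

theorem tenS_le_iff {U : Submodule ℂ A} {F : Submodule ℂ (ExtAlg k)}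
    {S : Submodule ℂ (A ⊗[ℂ] ExtAlg k)} : tenS U F ≤ S ↔ ∀ u ∈ U, ∀ f ∈ F, u ⊗ₜ[ℂ] f ∈ S := by
  refine ⟨fun h u hu f hf => h (Submodule.subset_span ⟨u, hu, f, hf, rfl⟩), fun h => ?_⟩
  rw [tenS, Submodule.span_le]
  rintro _ ⟨u, hu, f, hf, rfl⟩
  exact h u hu f hf

theorem tmul_mem_tenS {U : Submodule ℂ A} {F : Submodule ℂ (ExtAlg k)} {u : A} {f : ExtAlg k}
    (hu : u ∈ U) (hf : f ∈ F) : u ⊗ₜ[ℂ] f ∈ tenS U F :=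
  tenS_le_iff.1 le_rfl u hu f hf

theorem iSupIndep_Egrade : iSupIndep (Egrade k) :=
  (DirectSum.Decomposition.isInternal fun i : ℕ => ⋀[ℂ]^i (Fin k → ℂ)).submodule_iSupIndep

theorem iSup_Egrade : ⨆ i, Egrade k i = ⊤ :=
  (DirectSum.Decomposition.isInternal fun i : ℕ => ⋀[ℂ]^i (Fin k → ℂ)).submodule_iSup_eq_top

theorem mul_mem_Egrade {i j : ℕ} {e f : ExtAlg k} (he : e ∈ Egrade k i) (hf : f ∈ Egrade k j) :
    e * f ∈ Egrade k (i + j) := by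
  rw [Egrade, pow_add]
  exact Submodule.mul_mem_mul he hf

theorem Egrade_le_Eodd {i : ℕ} (hi : Odd i) : Egrade k i ≤ Eodd k :=
  le_biSup (Egrade k) (show i ∈ {i : ℕ | Odd i} from hi)

theorem Egrade_le_EevenGe2 {i : ℕ} (hi : Even i) (h2 : 2 ≤ i) : Egrade k i ≤ EevenGe2 k :=
  le_biSup (Egrade k) (show i ∈ {i : ℕ | Even i ∧ 2 ≤ i} from ⟨hi, h2⟩)

theorem disjoint_Egrade_zero_sup_Eodd_EevenGe2 : Disjoint (Egrade k 0 ⊔ Eodd k) (EevenGe2 k) := by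
  have hle : Egrade k 0 ⊔ Eodd k ≤ ⨆ i ∈ {i : ℕ | Even i ∧ 2 ≤ i}ᶜ, Egrade k i :=
    sup_le (le_biSup (Egrade k) (by simp))
      (biSup_mono fun i (hi : Odd i) ⟨hev, _⟩ => Nat.not_even_iff_odd.2 hi hev)
  exact (iSupIndep_Egrade.disjoint_biSup_biSup disjoint_compl_left).mono_left hle

theorem span_tmul_Egrade_eq_top :
    Submodule.span ℂ {z : A ⊗[ℂ] ExtAlg k | ∃ a i, ∃ e ∈ Egrade k i, z = a ⊗ₜ[ℂ] e} = ⊤ := by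
  set S := Submodule.span ℂ {z : A ⊗[ℂ] ExtAlg k | ∃ a i, ∃ e ∈ Egrade k i, z = a ⊗ₜ[ℂ] e}
  rw [eq_top_iff, ← TensorProduct.span_tmul_eq_top, Submodule.span_le]
  rintro _ ⟨a, e, rfl⟩
  have hgraded : ⨆ i, Egrade k i ≤ S.comap (TensorProduct.mk ℂ A (ExtAlg k) a) :=
    iSup_le fun i e he => Submodule.subset_span ⟨a, i, e, he, rfl⟩
  exact hgraded (iSup_Egrade (k := k) ▸ Submodule.mem_top)

theorem commutator_tmul_of_mem_Egrade {i j : ℕ} (a b : A) {e f : ExtAlg k}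
    (he : e ∈ Egrade k i) (hf : f ∈ Egrade k j) :
    (a ⊗ₜ[ℂ] e) * (b ⊗ₜ[ℂ] f) - (b ⊗ₜ[ℂ] f) * (a ⊗ₜ[ℂ] e)
      = (a * b - (-1 : ℂ) ^ (i * j) • (b * a)) ⊗ₜ[ℂ] (e * f) := by
  rw [Algebra.TensorProduct.tmul_mul_tmul, Algebra.TensorProduct.tmul_mul_tmul,
    ExteriorAlgebra.mul_comm_of_mem_exteriorPower he hf, tmul_smul, smul_tmul', sub_tmul]

theorem commutator_tmul_mem {i j : ℕ} (a b : A) {e f : ExtAlg k}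
    (he : e ∈ Egrade k i) (hf : f ∈ Egrade k j) :
    (a ⊗ₜ[ℂ] e) * (b ⊗ₜ[ℂ] f) - (b ⊗ₜ[ℂ] f) * (a ⊗ₜ[ℂ] e) ∈
      tenS (commS (⊤ : Submodule ℂ A) ⊤) (Egrade k 0 ⊔ Eodd k) + tenS ⊤ (EevenGe2 k) := by
  have hef := mul_mem_Egrade he hf
  rw [commutator_tmul_of_mem_Egrade a b he hf]
  by_cases hhigh : Even (i + j) ∧ 2 ≤ i + j
  · exact Submodule.mem_sup_right
      (tmul_mem_tenS Submodule.mem_top (Egrade_le_EevenGe2 hhigh.1 hhigh.2 hef))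
  have hlow : i + j = 0 ∨ Odd (i + j) := by
    rcases Nat.even_or_odd (i + j) with hev | hodd
    · refine Or.inl (by_contra fun h0 => hhigh ⟨hev, ?_⟩)
      rcases hev with ⟨m, hm⟩
      omega
    · exact Or.inr hodd
  have hsign : (-1 : ℂ) ^ (i * j) = 1 := by
    refine Even.neg_one_pow (Nat.even_mul.2 ?_)
    rcases hlow with h0 | hodd
    · exact Or.inl (by simp [show i = 0 by omega])
    · rcases Nat.even_or_odd i with hi | hi
      · exact Or.inl hi
      · exact Or.inr (by simpa [Nat.odd_add, hi] using hodd)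
  have hef' : e * f ∈ Egrade k 0 ⊔ Eodd k := by
    rcases hlow with h0 | hodd
    · exact Submodule.mem_sup_left (h0 ▸ hef)
    · exact Submodule.mem_sup_right (Egrade_le_Eodd hodd hef)
  rw [hsign, one_smul]
  exact Submodule.mem_sup_left
    (tmul_mem_tenS (commutator_mem_commS Submodule.mem_top Submodule.mem_top) hef')

theorem commS_top_top_le :
    commS (⊤ : Submodule ℂ (A ⊗[ℂ] ExtAlg k)) ⊤ ≤
      tenS (commS (⊤ : Submodule ℂ A) ⊤) (Egrade k 0 ⊔ Eodd k) + tenS ⊤ (EevenGe2 k) := by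
  rw [← span_tmul_Egrade_eq_top]
  refine commS_span_le ?_
  rintro _ ⟨a, i, e, he, rfl⟩ _ ⟨b, j, f, hf, rfl⟩
  exact commutator_tmul_mem a b he hf

theorem tenS_commS_le_commS (F : Submodule ℂ (ExtAlg k)) :
    tenS (commS (⊤ : Submodule ℂ A) ⊤) F ≤ commS (⊤ : Submodule ℂ (A ⊗[ℂ] ExtAlg k)) ⊤ := by
  refine tenS_le_iff.2 fun u hu f _ => ?_
  suffices commS (⊤ : Submodule ℂ A) ⊤ ≤
      (commS ⊤ ⊤).comap ((TensorProduct.mk ℂ A (ExtAlg k)).flip f) from this hu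
  refine Submodule.span_le.2 ?_
  rintro _ ⟨a, -, b, -, rfl⟩
  have hlift : (a * b - b * a) ⊗ₜ[ℂ] f
      = (a ⊗ₜ[ℂ] f) * (b ⊗ₜ[ℂ] (1 : ExtAlg k)) - (b ⊗ₜ[ℂ] (1 : ExtAlg k)) * (a ⊗ₜ[ℂ] f) := by
    simp [Algebra.TensorProduct.tmul_mul_tmul, sub_tmul]
  simpa [hlift] using commutator_mem_commS (x := a ⊗ₜ[ℂ] f) (y := b ⊗ₜ[ℂ] (1 : ExtAlg k))
    Submodule.mem_top Submodule.mem_top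

theorem tmul_ι_mul_mem_commS {n : ℕ} (hn : Odd n) (a : A) (v : Fin k → ℂ) {p : ExtAlg k}
    (hp : p ∈ Egrade k n) :
    a ⊗ₜ[ℂ] (ExteriorAlgebra.ι ℂ v * p) ∈ commS (⊤ : Submodule ℂ (A ⊗[ℂ] ExtAlg k)) ⊤ := by
  have hanti : p * ExteriorAlgebra.ι ℂ v = -(ExteriorAlgebra.ι ℂ v * p) := by
    rw [ExteriorAlgebra.mul_ι_of_mem_exteriorPower hp, hn.neg_one_pow, neg_one_smul]
  have hcomm : (a ⊗ₜ[ℂ] ExteriorAlgebra.ι ℂ v) * ((1 : A) ⊗ₜ[ℂ] p)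
        - ((1 : A) ⊗ₜ[ℂ] p) * (a ⊗ₜ[ℂ] ExteriorAlgebra.ι ℂ v)
      = (2 : ℂ) • (a ⊗ₜ[ℂ] (ExteriorAlgebra.ι ℂ v * p)) := by
    rw [Algebra.TensorProduct.tmul_mul_tmul, Algebra.TensorProduct.tmul_mul_tmul,
      one_mul, mul_one, hanti, tmul_neg, sub_neg_eq_add, two_smul]
  have hmem := Submodule.smul_mem _ (2⁻¹ : ℂ)
    (commutator_mem_commS (x := a ⊗ₜ[ℂ] ExteriorAlgebra.ι ℂ v) (y := (1 : A) ⊗ₜ[ℂ] p)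
      Submodule.mem_top Submodule.mem_top)
  rwa [hcomm, smul_smul, inv_mul_cancel₀ two_ne_zero, one_smul] at hmem

theorem tenS_EevenGe2_le_commS :
    tenS (⊤ : Submodule ℂ A) (EevenGe2 k) ≤ commS (⊤ : Submodule ℂ (A ⊗[ℂ] ExtAlg k)) ⊤ := by
  refine tenS_le_iff.2 fun a _ f hf => ?_
  suffices EevenGe2 k ≤ (commS ⊤ ⊤).comap (TensorProduct.mk ℂ A (ExtAlg k) a) from this hf
  refine iSup₂_le fun i ⟨hev, h2⟩ => ?_
  obtain ⟨n, rfl⟩ : ∃ n, i = n + 1 := ⟨i - 1, by omega⟩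
  have hn : Odd n := by rcases hev with ⟨m, hm⟩; exact ⟨m - 1, by omega⟩
  rw [Egrade, pow_succ', Submodule.mul_le]
  rintro _ ⟨v, rfl⟩ p hp
  exact tmul_ι_mul_mem_commS hn a v hp

theorem disjoint_tenS (U V : Submodule ℂ A) {F G : Submodule ℂ (ExtAlg k)} (h : Disjoint F G) :
    Disjoint (tenS U F) (tenS V G) := by
  obtain ⟨F', hFF', hcompl⟩ := h.exists_isCompl
  set π := LinearMap.lTensor A (G.projection F' hcompl.symm)
  have hker : tenS U F ≤ LinearMap.ker π := tenS_le_iff.2 fun u _ f hf => by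
    rw [LinearMap.mem_ker, LinearMap.lTensor_tmul,
      Submodule.projection_apply_of_mem_right _ (hFF' hf), tmul_zero]
  have hfix : tenS V G ≤ LinearMap.eqLocus π LinearMap.id := tenS_le_iff.2 fun u _ g hg => by
    simp [π, Submodule.projection_apply_of_mem_left _ hg]
  refine Submodule.disjoint_def.2 fun z hzF hzG => ?_
  have hz0 : π z = 0 := hker hzF
  have hzz : π z = z := hfix hzG
  rw [← hzz, hz0]

end TensorExterior

/-- with `B = A ⊗ E`,
`[B,B] = [A,A] ⊗ (E^0 ⊕ E_−) + A ⊗ E_+^{≥2}`, and the two summands intersect trivially. -/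
theorem stmt_14 (A : Type*) [Ring A] [Algebra ℂ A] (k : ℕ) :
    commS (⊤ : Submodule ℂ (A ⊗[ℂ] ExtAlg k)) ⊤ =
        tenS (commS (⊤ : Submodule ℂ A) ⊤) (Egrade k 0 ⊔ Eodd k)
        + tenS (⊤ : Submodule ℂ A) (EevenGe2 k)
      ∧ tenS (commS (⊤ : Submodule ℂ A) ⊤) (Egrade k 0 ⊔ Eodd k)
        ⊓ tenS (⊤ : Submodule ℂ A) (EevenGe2 k) = ⊥ :=
  ⟨le_antisymm commS_top_top_le (sup_le (tenS_commS_le_commS _) tenS_EevenGe2_le_commS),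
    (disjoint_tenS _ _ disjoint_Egrade_zero_sup_Eodd_EevenGe2).eq_bot⟩
end

section
/- For every n ≥ 2, the antisymmetrizer s = Σ_{σ ∈ S_n} sgn(σ)·x_{σ(1)} x_{σ(2)} ⋯ x_{σ(n)} does not lie in L_3(A_n); equivalently, the subspace of multilinear elements of A_n transforming by the sign representation of S_n intersects L_3 trivially. -/
/-!
Send `x_i` to the basis vector `e_i` of `ℂⁿ` inside the exterior algebra `Λ(ℂⁿ)`. There, even
elements are central and every commutator is even, so the image of `L_2` is central and `L_3`
maps to zero; but the antisymmetrizer maps to `n! • e_1 ∧ ⋯ ∧ e_n ≠ 0`.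
-/

open CliffordAlgebra ExteriorAlgebra

namespace ExteriorAlgebra

variable {R M : Type*} [CommRing R] [AddCommGroup M] [Module R M]

theorem ι_mul_eq_involute_mul (v : M) (x : ExteriorAlgebra R M) :
    ι R v * x = involute x * ι R v := by
  induction x using CliffordAlgebra.induction with
  | algebraMap r => rw [AlgHom.commutes]; exact (Algebra.commutes r _).symm
  | ι w => rw [involute_ι, neg_mul, eq_neg_iff_add_eq_zero]; exact ι_add_mul_swap v w
  | mul x y hx hy => rw [← mul_assoc, hx, mul_assoc, hy, ← mul_assoc, map_mul]
  | add x y hx hy => rw [mul_add, hx, hy, map_add, add_mul]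

theorem commute_of_mem_evenOdd_zero {x : ExteriorAlgebra R M}
    (hx : x ∈ evenOdd (0 : QuadraticForm R M) 0) (y : ExteriorAlgebra R M) : Commute x y := by
  induction y using CliffordAlgebra.induction with
  | algebraMap r => exact (Algebra.commutes r x).symm
  | ι w => rw [Commute, SemiconjBy, ι_mul_eq_involute_mul, involute_eq_of_mem_even hx]
  | mul y z hy hz => exact hy.mul_right hz
  | add y z hy hz => exact hy.add_right hz

theorem mul_sub_mul_mem_evenOdd_zero (a b : ExteriorAlgebra R M) :
    a * b - b * a ∈ evenOdd (0 : QuadraticForm R M) 0 := by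
  have htop := (evenOdd_isCompl (0 : QuadraticForm R M)).sup_eq_top
  obtain ⟨a₀, ha₀, a₁, ha₁, rfl⟩ := Submodule.mem_sup.mp (htop ▸ Submodule.mem_top (x := a))
  obtain ⟨b₀, hb₀, b₁, hb₁, rfl⟩ := Submodule.mem_sup.mp (htop ▸ Submodule.mem_top (x := b))
  have hodd : ∀ {x y : ExteriorAlgebra R M}, x ∈ evenOdd (0 : QuadraticForm R M) 1 →
      y ∈ evenOdd (0 : QuadraticForm R M) 1 → x * y ∈ evenOdd (0 : QuadraticForm R M) 0 :=
    fun hx hy => by simpa [show (1 : ZMod 2) + 1 = 0 from rfl] using SetLike.mul_mem_graded hx hy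
  have hcomm : (a₀ + a₁) * (b₀ + b₁) - (b₀ + b₁) * (a₀ + a₁) = a₁ * b₁ - b₁ * a₁ := by
    simp only [mul_add, add_mul]
    rw [(commute_of_mem_evenOdd_zero ha₀ b₀).eq, (commute_of_mem_evenOdd_zero ha₀ b₁).eq,
      (commute_of_mem_evenOdd_zero hb₀ a₁).eq]
    abel
  rw [hcomm]
  exact Submodule.sub_mem _ (hodd ha₁ hb₁) (hodd hb₁ ha₁)

theorem commute_mul_sub_mul (a b c : ExteriorAlgebra R M) : Commute (a * b - b * a) c :=
  commute_of_mem_evenOdd_zero (mul_sub_mul_mem_evenOdd_zero a b) c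

theorem ιMulti_basis_ne_zero [Nontrivial R] {n : ℕ} (b : Module.Basis (Fin n) R M) :
    ιMulti R n b ≠ 0 := by
  intro h
  have := congrArg (liftAlternating (Pi.single n b.det)) h
  rw [liftAlternating_apply_ιMulti, Pi.single_eq_same, b.det_self, map_zero] at this
  exact one_ne_zero this

theorem sum_sign_smul_ιMulti_comp_perm {n : ℕ} (v : Fin n → M) :
    ∑ σ : Equiv.Perm (Fin n), ((Equiv.Perm.sign σ : ℤ) : R) • ιMulti R n (v ∘ σ)
      = Fintype.card (Equiv.Perm (Fin n)) • ιMulti R n v := by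
  simp only [AlternatingMap.map_perm, Int.cast_smul_eq_zsmul, Units.smul_def, smul_smul,
    ← Units.val_mul, Int.units_mul_self, Units.val_one, one_smul, Finset.sum_const,
    Finset.card_univ]

theorem freeAlgebraLift_ofFn_prod {X : Type*} (f : X → M) {n : ℕ} (v : Fin n → X) :
    FreeAlgebra.lift R (ι R ∘ f) (List.ofFn fun i => FreeAlgebra.ι R (v i)).prod
      = ιMulti R n (f ∘ v) := by
  simp [map_list_prod, List.map_ofFn, ιMulti_apply, Function.comp_def]

end ExteriorAlgebra

section LowerCentralSeries

variable {n : ℕ} {B : Type*} [Ring B] [Algebra ℂ B] (φ : FreeAlgebra ℂ (Fin n) →ₐ[ℂ] B)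

theorem commute_map_of_mem_lcs_two (hB : ∀ a b c : B, Commute (a * b - b * a) c)
    {w : FreeAlgebra ℂ (Fin n)} (hw : w ∈ lcs n 2) (c : B) :
    Commute (φ w) c := by
  induction hw using Submodule.span_induction with
  | mem y hy =>
      obtain ⟨a, u, -, rfl⟩ := hy
      simpa only [map_sub, map_mul] using hB (φ a) (φ u) c
  | zero => rw [map_zero]; exact Commute.zero_left c
  | add x y _ _ hx hy => rw [map_add]; exact hx.add_left hy
  | smul r x _ hx => rw [map_smul]; exact hx.smul_left r

theorem map_eq_zero_of_mem_lcs_three (hB : ∀ a b c : B, Commute (a * b - b * a) c)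
    {x : FreeAlgebra ℂ (Fin n)} (hx : x ∈ lcs n 3) :
    φ x = 0 := by
  induction hx using Submodule.span_induction with
  | mem y hy =>
      obtain ⟨a, w, hw, rfl⟩ := hy
      rw [map_sub, map_mul, map_mul, (commute_map_of_mem_lcs_two φ hB hw (φ a)).eq, sub_self]
  | zero => exact map_zero φ
  | add x y _ _ hx hy => rw [map_add, hx, hy, add_zero]
  | smul r x _ hx => rw [map_smul, hx, smul_zero]

end LowerCentralSeries

theorem stmt_18_general (n : ℕ) :
    (∑ σ : Equiv.Perm (Fin n),
        ((Equiv.Perm.sign σ : ℤ) : ℂ) •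
          (List.ofFn fun i : Fin n => FreeAlgebra.ι ℂ (σ i)).prod)
      ∉ lcs n 3 := by
  intro hmem
  set e := Pi.basisFun ℂ (Fin n)
  set φ := FreeAlgebra.lift ℂ (ι ℂ ∘ e)
  have himage : φ (∑ σ : Equiv.Perm (Fin n), ((Equiv.Perm.sign σ : ℤ) : ℂ) •
        (List.ofFn fun i : Fin n => FreeAlgebra.ι ℂ (σ i)).prod)
      = Fintype.card (Equiv.Perm (Fin n)) • ιMulti ℂ n e := by
    simp only [φ, map_sum, map_smul, freeAlgebraLift_ofFn_prod]
    exact sum_sign_smul_ιMulti_comp_perm e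
  rw [map_eq_zero_of_mem_lcs_three φ commute_mul_sub_mul hmem, ← Nat.cast_smul_eq_nsmul ℂ]
    at himage
  exact smul_ne_zero (Nat.cast_ne_zero.mpr Fintype.card_ne_zero) (ιMulti_basis_ne_zero e)
    himage.symm

/-- the antisymmetrizer `s = Σ_{σ ∈ S_n} sgn(σ)·x_{σ(1)} ⋯ x_{σ(n)}`
does not lie in `L_3(A_n)`. -/
theorem stmt_18 (n : ℕ) (hn : 2 ≤ n) :
    (∑ σ : Equiv.Perm (Fin n),
        ((Equiv.Perm.sign σ : ℤ) : ℂ) •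
          (List.ofFn fun i : Fin n => FreeAlgebra.ι ℂ (σ i)).prod)
      ∉ lcs n 3 :=
  stmt_18_general n
end
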